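/- arXiv:math/0311322 — 5 statements merged into one kernel-verified Lean document; each statement's English description precedes it below -/
import Mathlib

section
/- Let K be a nonempty set, g : K → K a map, and u : K → ℂ a bounded function. Let λ > 1 be real, η ∈ ℂ with |η| = λ, and m ≥ 1 an integer. For j ≥ m−1 set s_j := C(j, m−1)·η^{j−m+1}, and for n ≥ m−1 and x ∈ K define v_n(x) := (1/(n^{m−1}·λ^n))·Σ_{j=m−1}^{n} s_j·u(g^{n−j}(x)). Then there exist a bounded function v : K → ℂ and a constant C > 0 such that sup_{x∈K} |(λ/η)^n·v_n(x) − v(x)| ≤ C/n for every integer n ≥ m. -/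
/-!
Reflecting the summation index (`k = n - j`) and multiplying by `(λ/η)^n` turns `v_n(x)` into
`η^{-r}/r! · ∑_{k ≤ n} a_{n,k} w_k(x)` with `r = m - 1`, `w_k(x) = η^{-k} u(g^k x)` and
`a_{n,k} = (n-k)(n-k-1)⋯(n-k-r+1) / n^r`. Since `|η| = λ > 1`, `‖w_k‖ ≤ B λ^{-k}` decays
geometrically, uniformly in `x`, while Bernoulli's inequality gives `|a_{n,k} - 1| ≤ r(k+r)/n`.
Hence the twisted sequence is `O(1/n)`-close to `v(x) = η^{-r}/r! · ∑_k w_k(x)`.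
-/

open Finset

theorem one_sub_mul_le_descFactorial_div_pow {n k r : ℕ} (hn : 0 < n) (h : k + r ≤ n) :
    1 - r * (k + r) / n ≤ ((n - k).descFactorial r : ℝ) / n ^ r := by
  have hn' : (0 : ℝ) < n := by exact_mod_cast hn
  have hkr : ((k + r : ℕ) : ℝ) / n ≤ 1 := by
    rw [div_le_one hn']
    exact_mod_cast h
  have hdesc : ((n - (k + r) : ℕ) : ℝ) ^ r ≤ (n - k).descFactorial r := by
    exact_mod_cast (Nat.pow_le_pow_left (by omega) r).trans (Nat.pow_sub_le_descFactorial (n - k) r)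
  calc 1 - r * (k + r) / n = 1 + r * -(((k + r : ℕ) : ℝ) / n) := by push_cast; ring
    _ ≤ (1 + -(((k + r : ℕ) : ℝ) / n)) ^ r := one_add_mul_le_pow (by linarith) r
    _ = ((n - (k + r) : ℕ) : ℝ) ^ r / n ^ r := by
      rw [Nat.cast_sub h, ← div_pow]
      field_simp
      ring
    _ ≤ _ := by gcongr

theorem abs_descFactorial_div_pow_sub_one_le {n k : ℕ} (hn : 0 < n) (hk : k ≤ n) (r : ℕ) :
    |((n - k).descFactorial r : ℝ) / n ^ r - 1| ≤ r * (k + r) / n := by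
  have hn' : (0 : ℝ) < n := by exact_mod_cast hn
  rcases le_or_gt (k + r) n with h | h
  · have hle : ((n - k).descFactorial r : ℝ) / n ^ r ≤ 1 := by
      rw [div_le_one (by positivity)]
      exact_mod_cast (Nat.descFactorial_le_pow _ r).trans (Nat.pow_le_pow_left (by omega) r)
    rw [abs_sub_comm, abs_of_nonneg (by linarith)]
    linarith [one_sub_mul_le_descFactorial_div_pow hn h]
  · rw [Nat.descFactorial_eq_zero_iff_lt.2 (by omega), Nat.cast_zero, zero_div, zero_sub,
      abs_neg, abs_one, le_div_iff₀ hn', one_mul]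
    have : (n : ℝ) ≤ k + r := by exact_mod_cast h.le
    have : (1 : ℝ) ≤ r := by exact_mod_cast (by omega : 1 ≤ r)
    nlinarith

theorem norm_sum_smul_sub_tsum_le {ι 𝕜 E : Type*} [NormedField 𝕜] [NormedAddCommGroup E]
    [NormedSpace 𝕜 E] {w : ι → E} {a : ι → 𝕜} {ρ ε : ι → ℝ} (s : Finset ι) (hw : Summable w)
    (hwρ : ∀ i, ‖w i‖ ≤ ρ i) (ha : ∀ i ∈ s, ‖a i - 1‖ ≤ ε i) (hε : ∀ i ∉ s, 1 ≤ ε i)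
    (hερ : Summable fun i ↦ ε i * ρ i) :
    ‖∑ i ∈ s, a i • w i - ∑' i, w i‖ ≤ ∑' i, ε i * ρ i := by
  classical
  set a' : ι → 𝕜 := fun i ↦ if i ∈ s then a i else 0
  have ha' : ∀ i ∉ s, a' i • w i = 0 := fun i hi ↦ by simp [a', hi]
  have hsum : ∑ i ∈ s, a i • w i = ∑' i, a' i • w i := by
    rw [tsum_eq_sum ha']
    exact sum_congr rfl fun i hi ↦ by simp [a', hi]
  rw [hsum, ← (hasSum_sum_of_ne_finset_zero ha').summable.tsum_sub hw]
  refine tsum_of_norm_bounded hερ.hasSum fun i ↦ ?_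
  rw [show a' i • w i - w i = (a' i - 1) • w i by rw [sub_smul, one_smul], norm_smul]
  have hεi : ‖a' i - 1‖ ≤ ε i := by
    by_cases hi : i ∈ s
    · simpa [a', hi] using ha i hi
    · simpa [a', hi] using hε i hi
  exact mul_le_mul hεi (hwρ i) (norm_nonneg _) ((norm_nonneg _).trans hεi)

theorem norm_sum_descFactorial_div_pow_smul_sub_tsum_le {E : Type*} [NormedAddCommGroup E]
    [NormedSpace ℝ E] [CompleteSpace E] {w : ℕ → E} {B q : ℝ} (hq0 : 0 ≤ q) (hq1 : q < 1)
    (hw : ∀ k, ‖w k‖ ≤ B * q ^ k) {n : ℕ} (hn : 0 < n) (r : ℕ) :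
    ‖∑ k ∈ range (n + 1), (((n - k).descFactorial r : ℝ) / n ^ r) • w k - ∑' k, w k‖
      ≤ (r + 1) * B * (∑' k : ℕ, ((k : ℝ) + r) * q ^ k) / n := by
  have hgeom := summable_geometric_of_lt_one hq0 hq1
  have hS : Summable fun k : ℕ ↦ ((k : ℝ) + r) * q ^ k := by
    have hk : Summable fun k : ℕ ↦ (k : ℝ) * q ^ k := by
      simpa using summable_pow_mul_geometric_of_norm_lt_one 1 (by rwa [Real.norm_of_nonneg hq0])
    simpa only [add_mul] using hk.add (hgeom.mul_left _)
  have ha : ∀ k ∈ range (n + 1),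
      ‖((n - k).descFactorial r : ℝ) / n ^ r - 1‖ ≤ (r + 1) * (k + r) / n := fun k hk ↦ by
    refine (abs_descFactorial_div_pow_sub_one_le hn (Nat.lt_succ_iff.1 (mem_range.1 hk)) r).trans ?_
    gcongr
    linarith
  have hε : ∀ k ∉ range (n + 1), 1 ≤ ((r : ℝ) + 1) * (k + r) / n := fun k hk ↦ by
    have : (n : ℝ) ≤ k := by exact_mod_cast Nat.le_of_succ_le (not_lt.1 (mem_range.not.1 hk))
    rw [one_le_div (by positivity)]
    nlinarith
  have hερ : (fun k : ℕ ↦ ((r : ℝ) + 1) * (k + r) / n * (B * q ^ k))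
      = fun k : ℕ ↦ (r + 1) * B / n * ((k + r) * q ^ k) := by
    funext k
    ring
  calc _ ≤ ∑' k : ℕ, ((r : ℝ) + 1) * (k + r) / n * (B * q ^ k) := by
        refine norm_sum_smul_sub_tsum_le _ ((hgeom.mul_left B).of_norm_bounded hw) hw ha hε ?_
        rw [hερ]
        exact hS.mul_left _
    _ = _ := by
      rw [hερ, tsum_mul_left]
      ring

theorem inv_pow_mul_sum_choose {η : ℂ} (hη : η ≠ 0) (r n : ℕ) (f : ℕ → ℂ) :
    η⁻¹ ^ n * ∑ j ∈ Icc r n, (j.choose r : ℂ) * η ^ (j - r) * f (n - j)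
      = η⁻¹ ^ r * ∑ k ∈ range (n + 1), ((n - k).choose r : ℂ) * (η⁻¹ ^ k * f k) := by
  rw [← sum_range_reflect _ (n + 1), mul_sum, mul_sum]
  simp only [add_tsub_cancel_right]
  have hsub : Icc r n ⊆ range (n + 1) := fun j hj ↦ by simp only [mem_Icc, mem_range] at hj ⊢; omega
  rw [← sum_subset hsub fun j hj hj' ↦ ?_]
  · refine sum_congr rfl fun j hj ↦ ?_
    obtain ⟨a, rfl⟩ : ∃ a, j = r + a := ⟨j - r, by simp only [mem_Icc] at hj; omega⟩
    obtain ⟨b, rfl⟩ : ∃ b, n = r + a + b := ⟨n - (r + a), by simp only [mem_Icc] at hj; omega⟩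
    rw [show r + a + b - (r + a) = b by omega, show r + a + b - b = r + a by omega,
      Nat.add_sub_cancel_left, inv_pow, inv_pow, inv_pow]
    field_simp
    ring
  · simp only [mem_Icc, mem_range] at hj hj'
    rw [Nat.sub_sub_self (by omega), Nat.choose_eq_zero_of_lt (by omega)]
    simp

theorem div_pow_mul_sum_choose_eq {lam : ℝ} {η : ℂ} (hlam : lam ≠ 0) (hη : η ≠ 0) {n : ℕ}
    (hn : 0 < n) (r : ℕ) (f : ℕ → ℂ) :
    ((lam : ℂ) / η) ^ n * (((n : ℂ) ^ r * (lam : ℂ) ^ n)⁻¹ *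
        ∑ j ∈ Icc r n, (j.choose r : ℂ) * η ^ (j - r) * f (n - j))
      = η⁻¹ ^ r / r.factorial * ∑ k ∈ range (n + 1),
          (((n - k).descFactorial r : ℝ) / n ^ r) • (η⁻¹ ^ k * f k) := by
  have hlam' : (lam : ℂ) ^ n ≠ 0 := pow_ne_zero _ (by exact_mod_cast hlam)
  have hn' : (n : ℂ) ≠ 0 := by exact_mod_cast hn.ne'
  calc _ = ((n : ℂ) ^ r)⁻¹ * (η⁻¹ ^ n *
        ∑ j ∈ Icc r n, (j.choose r : ℂ) * η ^ (j - r) * f (n - j)) := by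
        rw [div_pow, inv_pow]
        field_simp
    _ = _ := by
      rw [inv_pow_mul_sum_choose hη, mul_sum, mul_sum, mul_sum]
      refine sum_congr rfl fun k _ ↦ ?_
      rw [Complex.real_smul, Nat.descFactorial_eq_factorial_mul_choose]
      push_cast
      field_simp [r.factorial_ne_zero]

theorem stmt6 {K : Type*} [Nonempty K] (g : K → K) (u : K → ℂ)
    (hu : ∃ B : ℝ, ∀ x, ‖u x‖ ≤ B)
    (lam : ℝ) (hlam : 1 < lam) (η : ℂ) (hη : ‖η‖ = lam)
    (m : ℕ) (hm : 1 ≤ m)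
    (v : ℕ → K → ℂ)
    (hv : ∀ n, m - 1 ≤ n → ∀ x, v n x =
      ((n : ℂ) ^ (m - 1) * (lam : ℂ) ^ n)⁻¹ *
        ∑ j ∈ Finset.Icc (m - 1) n,
          (j.choose (m - 1) : ℂ) * η ^ (j + 1 - m) * u (g^[n - j] x)) :
    ∃ vlim : K → ℂ, (∃ B' : ℝ, ∀ x, ‖vlim x‖ ≤ B') ∧
      ∃ C : ℝ, 0 < C ∧ ∀ n : ℕ, m ≤ n → ∀ x,
        ‖((lam : ℂ) / η) ^ n * v n x - vlim x‖ ≤ C / n := by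
  obtain ⟨r, rfl⟩ : ∃ r, m = r + 1 := ⟨m - 1, by omega⟩
  simp only [Nat.add_sub_cancel, Nat.add_sub_add_right] at hv
  obtain ⟨B, hB⟩ := hu
  have hB0 : 0 ≤ B := (norm_nonneg _).trans (hB (Classical.arbitrary K))
  have hη0 : η ≠ 0 := by rintro rfl; rw [norm_zero] at hη; linarith
  have hq0 : 0 ≤ lam⁻¹ := by positivity
  have hq1 : lam⁻¹ < 1 := inv_lt_one_of_one_lt₀ hlam
  have hηq : ‖η⁻¹‖ = lam⁻¹ := by rw [norm_inv, hη]
  have hw : ∀ x k, ‖η⁻¹ ^ k * u (g^[k] x)‖ ≤ B * lam⁻¹ ^ k := fun x k ↦ by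
    rw [norm_mul, norm_pow, hηq, mul_comm]
    exact mul_le_mul_of_nonneg_right (hB _) (by positivity)
  have hc : ‖η⁻¹ ^ r / r.factorial‖ ≤ 1 := by
    rw [norm_div, norm_pow, hηq, Complex.norm_natCast]
    exact div_le_one_of_le₀ ((pow_le_one₀ hq0 hq1.le).trans (Nat.one_le_cast.2 r.factorial_pos))
      (by positivity)
  set S := ∑' k : ℕ, ((k : ℝ) + r) * lam⁻¹ ^ k
  have hS0 : 0 ≤ S := tsum_nonneg fun k ↦ by positivity
  refine ⟨fun x ↦ η⁻¹ ^ r / r.factorial * ∑' k, η⁻¹ ^ k * u (g^[k] x),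
    ⟨B * (1 - lam⁻¹)⁻¹, fun x ↦ ?_⟩, (r + 1) * B * S + 1, by positivity, fun n hn x ↦ ?_⟩
  · rw [norm_mul]
    exact (mul_le_of_le_one_left (norm_nonneg _) hc).trans
      (tsum_of_norm_bounded ((hasSum_geometric_of_lt_one hq0 hq1).mul_left B) (hw x))
  · have hn0 : 0 < n := by omega
    dsimp only
    rw [hv n (by omega) x, div_pow_mul_sum_choose_eq (by positivity) hη0 hn0 r
      fun k ↦ u (g^[k] x), ← mul_sub, norm_mul]
    refine (mul_le_of_le_one_left (norm_nonneg _) hc).trans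
      ((norm_sum_descFactorial_div_pow_smul_sub_tsum_le hq0 hq1 (hw x) hn0 r).trans ?_)
    gcongr
    linarith
end

section
/- Let K be a nonempty set, g : K → K a map, and u : K → ℂ a bounded function. Let λ > 1 be real, η ∈ ℂ with |η| = λ, and m ≥ 1 an integer. For j ≥ m−1 set s_j := C(j, m−1)·η^{j−m+1}, and for n ≥ m−1 and x ∈ K define v_n(x) := (1/(n^{m−1}·λ^n))·Σ_{j=m−1}^{n} s_j·u(g^{n−j}(x)). Then there exists a constant C > 0 such that sup_{x∈K} |v_{n+1}(x) − (η/λ)·v_n(x)| ≤ C/n² for every integer n ≥ m. -/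
/-!
Put `p = m - 1`, `a k = u (g^[k] x)` and `S n = ∑_{j=p}^{n} C(j,p) η^(j-p) a(n-j)`. Shifting the
index gives `n^p S(n+1) - (n+1)^p η S(n) = n^p a(n+1-p) + ∑_{j=p}^{n} d_j η^(j+1-p) a(n-j)` with
`d_j = n^p C(j+1,p) - (n+1)^p C(j,p)`, and `v(n+1) - (η/λ) v(n)` is this divided by
`n^p (n+1)^p λ^(n+1)`. The top-order terms of `d_j` cancel: by `p C(j,p) = (j-p+1) C(j,p-1)`,
`p d_j = C(j,p-1) (p E + E (n-j) - R)` where `E = (n+1)^p - n^p` and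
`R = (n+1)^(p+1) - n^(p+1) - (p+1) n^p` are both `O(n^(p-1))`, so `|d_j| = O(n^(2p-2) (n-j+1))`.
Against `|η^(j+1-p)| ≤ λ^(n+1) λ^-(n-j)` the sum is then `O(n^(2p-2) λ^(n+1))` because
`∑ (k+1) λ^-k` converges, and the boundary term `n^p a(n+1-p)` is swamped by `λ^(n+1)`.
-/

open Finset

lemma sum_range_pow_mul_choose_le {x : ℝ} (hx : 1 ≤ x) {q k : ℕ} (hk : k ≤ q) :
    ∑ i ∈ range (k + 1), x ^ i * q.choose i ≤ 2 ^ q * x ^ k := by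
  calc ∑ i ∈ range (k + 1), x ^ i * q.choose i
      ≤ ∑ i ∈ range (k + 1), x ^ k * q.choose i := by
        refine sum_le_sum fun i hi => ?_
        gcongr
        exact Nat.lt_succ_iff.1 (mem_range.1 hi)
    _ ≤ ∑ i ∈ range (q + 1), x ^ k * q.choose i :=
        sum_le_sum_of_subset_of_nonneg (range_subset_range.2 (by omega)) fun _ _ _ => by positivity
    _ = 2 ^ q * x ^ k := by
        rw [← mul_sum, ← Nat.cast_sum, Nat.sum_range_choose]
        push_cast
        ring

lemma add_one_pow_succ (x : ℝ) (q : ℕ) :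
    (x + 1) ^ (q + 1) = x ^ (q + 1) + ∑ i ∈ range (q + 1), x ^ i * (q + 1).choose i := by
  rw [add_pow, sum_range_succ]
  simp [add_comm]

lemma add_one_pow_succ_succ (x : ℝ) (q : ℕ) :
    (x + 1) ^ (q + 2) = x ^ (q + 2) + (q + 2) * x ^ (q + 1)
      + ∑ i ∈ range (q + 1), x ^ i * (q + 2).choose i := by
  rw [add_pow, sum_range_succ, sum_range_succ, Nat.choose_succ_self_right]
  simp only [one_pow, mul_one, Nat.choose_self]
  push_cast
  ring

def chooseDefect (p n j : ℕ) : ℝ :=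
  (n : ℝ) ^ p * (j + 1).choose p - ((n : ℝ) + 1) ^ p * j.choose p

lemma abs_chooseDefect_mul_sq_le {p n j : ℕ} (hpj : p ≤ j) (hjn : j ≤ n) :
    |chooseDefect p n j| * n ^ 2 ≤ (p + 2) * 2 ^ p * n ^ (2 * p) * ((n - j : ℕ) + 1) := by
  rw [Nat.cast_sub hjn]
  have hjx : (j : ℝ) ≤ n := by exact_mod_cast hjn
  obtain _ | q := p
  · simp [chooseDefect]
    linarith
  have hx : 1 ≤ (n : ℝ) := by norm_cast; omega
  set x : ℝ := (n : ℝ)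
  have hpascal : ((j + 1).choose (q + 1) : ℝ) = (j.choose q : ℝ) + j.choose (q + 1) := by
    rw [Nat.choose_succ_succ']; push_cast; rfl
  have hratio : (j.choose (q + 1) : ℝ) * (q + 1) = (j.choose q : ℝ) * (j - q) := by
    rw [← Nat.cast_sub (by omega)]
    exact_mod_cast Nat.choose_succ_right_eq j q
  set E := (x + 1) ^ (q + 1) - x ^ (q + 1) with hEdef
  set R := (x + 1) ^ (q + 2) - x ^ (q + 2) - (q + 2) * x ^ (q + 1) with hRdef
  have hE : E = ∑ i ∈ range (q + 1), x ^ i * (q + 1).choose i := by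
    rw [hEdef, add_one_pow_succ]; ring
  have hR : R = ∑ i ∈ range (q + 1), x ^ i * (q + 2).choose i := by
    rw [hRdef, add_one_pow_succ_succ]; ring
  have hE0 : 0 ≤ E := hE ▸ by positivity
  have hR0 : 0 ≤ R := hR ▸ by positivity
  have hE2 : E ≤ 2 ^ (q + 1) * x ^ q := hE ▸ sum_range_pow_mul_choose_le hx (by omega)
  have hR2 : R ≤ 2 ^ (q + 2) * x ^ q := hR ▸ sum_range_pow_mul_choose_le hx (by omega)
  have hident :
      (q + 1) * chooseDefect (q + 1) n j = j.choose q * ((q + 1) * E + E * (x - j) - R) := by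
    unfold chooseDefect
    rw [hpascal]
    linear_combination (-E) * hratio
  have hchoose : (j.choose q : ℝ) ≤ x ^ q := by
    calc (j.choose q : ℝ) ≤ (j : ℝ) ^ q := by exact_mod_cast Nat.choose_le_pow j q
      _ ≤ x ^ q := by gcongr
  have hM : 0 ≤ 2 ^ (q + 1) * x ^ q := by positivity
  have ht : 0 ≤ x - j := sub_nonneg.2 hjx
  have hbracket :
      |(q + 1) * E + E * (x - j) - R| ≤ (q + 3) * (2 ^ (q + 1) * x ^ q) * (x - j + 1) := by
    rw [pow_succ] at hR2
    rw [abs_le]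
    constructor <;> nlinarith [mul_nonneg hE0 ht, mul_le_mul_of_nonneg_right hE2 ht,
      mul_nonneg hM ht, mul_nonneg (mul_nonneg hM ht) q.cast_nonneg,
      mul_le_mul_of_nonneg_left hE2 (q.cast_nonneg : (0 : ℝ) ≤ q)]
  have hscale : |chooseDefect (q + 1) n j| ≤ |(q + 1) * chooseDefect (q + 1) n j| := by
    rw [abs_mul, abs_of_pos (by positivity : (0 : ℝ) < q + 1)]
    exact le_mul_of_one_le_left (abs_nonneg _) (by simp)
  calc |chooseDefect (q + 1) n j| * x ^ 2
      ≤ x ^ q * ((q + 3) * (2 ^ (q + 1) * x ^ q) * (x - j + 1)) * x ^ 2 := by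
        rw [hident, abs_mul, Nat.abs_cast] at hscale
        gcongr
        exact hscale.trans (by gcongr)
    _ = (↑(q + 1) + 2) * 2 ^ (q + 1) * x ^ (2 * (q + 1)) * (x - j + 1) := by
        push_cast; ring

lemma sum_Icc_succ_eq_add_sum_Icc {M : Type*} [AddCommMonoid M] {p n : ℕ} (h : p ≤ n + 1)
    (f : ℕ → M) : ∑ j ∈ Icc p (n + 1), f j = f p + ∑ j ∈ Icc p n, f (j + 1) := by
  rw [← insert_Icc_add_one_left_eq_Icc h, sum_insert (by simp), ← map_add_right_Icc, sum_map]
  rfl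

lemma sum_Icc_comp_sub_le_tsum {f : ℕ → ℝ} (hf : Summable f) (hf0 : ∀ k, 0 ≤ f k) (p n : ℕ) :
    ∑ j ∈ Icc p n, f (n - j) ≤ ∑' k, f k :=
  calc ∑ j ∈ Icc p n, f (n - j)
      ≤ ∑ j ∈ range (n + 1), f (n - j) :=
        sum_le_sum_of_subset_of_nonneg (fun j hj => by simp at hj ⊢; omega) fun _ _ _ => hf0 _
    _ = ∑ k ∈ range (n + 1), f k := sum_range_reflect f (n + 1)
    _ ≤ ∑' k, f k := hf.sum_le_tsum _ fun _ _ => hf0 _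

lemma summable_add_one_mul_pow {r : ℝ} (h0 : 0 ≤ r) (h1 : r < 1) :
    Summable fun k : ℕ => ((k : ℝ) + 1) * r ^ k := by
  have hr : ‖r‖ < 1 := by rwa [Real.norm_of_nonneg h0]
  simpa [add_mul] using
    (summable_pow_mul_geometric_of_norm_lt_one 1 hr).add (summable_geometric_of_norm_lt_one hr)

lemma exists_sq_le_mul_pow {lam : ℝ} (hlam : 1 < lam) :
    ∃ c, ∀ k : ℕ, (k : ℝ) ^ 2 ≤ c * lam ^ k := by
  obtain ⟨c, hc⟩ := (tendsto_pow_const_div_const_pow_of_one_lt 2 hlam).bddAbove_range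
  refine ⟨c, fun k => ?_⟩
  rw [← div_le_iff₀ (by positivity)]
  exact hc ⟨k, rfl⟩

def chooseConv (p : ℕ) (η : ℂ) (a : ℕ → ℂ) (n : ℕ) : ℂ :=
  ∑ j ∈ Icc p n, (j.choose p : ℂ) * η ^ (j - p) * a (n - j)

noncomputable def chooseAverage (p : ℕ) (lam : ℝ) (η : ℂ) (a : ℕ → ℂ) (n : ℕ) : ℂ :=
  ((n : ℂ) ^ p * (lam : ℂ) ^ n)⁻¹ * chooseConv p η a n

section

variable {p : ℕ} {lam B : ℝ} {η : ℂ} {a : ℕ → ℂ}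

lemma pow_mul_chooseConv_succ_sub {n : ℕ} (h : p ≤ n + 1) :
    (n : ℂ) ^ p * chooseConv p η a (n + 1) - ((n : ℂ) + 1) ^ p * (η * chooseConv p η a n)
      = (n : ℂ) ^ p * a (n + 1 - p)
        + ∑ j ∈ Icc p n, (chooseDefect p n j : ℂ) * η ^ (j + 1 - p) * a (n - j) := by
  rw [chooseConv, chooseConv, sum_Icc_succ_eq_add_sum_Icc h, mul_add, mul_sum, mul_sum,
    mul_sum, add_sub_assoc, ← sum_sub_distrib]
  congr 1
  · simp
  refine sum_congr rfl fun j hj => ?_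
  rw [Nat.add_sub_add_right, show j + 1 - p = j - p + 1 by grind, pow_succ, chooseDefect]
  push_cast
  ring

lemma norm_sum_chooseDefect_mul_sq_le (hlam : 1 < lam) (hη : ‖η‖ = lam) (ha : ∀ k, ‖a k‖ ≤ B)
    (n : ℕ) :
    ‖∑ j ∈ Icc p n, (chooseDefect p n j : ℂ) * η ^ (j + 1 - p) * a (n - j)‖ * n ^ 2
      ≤ (p + 2) * 2 ^ p * B * (∑' k : ℕ, ((k : ℝ) + 1) * lam⁻¹ ^ k)
          * n ^ (2 * p) * lam ^ (n + 1) := by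
  have hB : 0 ≤ B := (norm_nonneg _).trans (ha 0)
  have hterm : ∀ j ∈ Icc p n,
      ‖(chooseDefect p n j : ℂ) * η ^ (j + 1 - p) * a (n - j)‖ * n ^ 2
        ≤ (p + 2) * 2 ^ p * B * n ^ (2 * p) * lam ^ (n + 1)
          * ((((n - j : ℕ) : ℝ) + 1) * lam⁻¹ ^ (n - j)) := by
    intro j hj
    obtain ⟨hpj, hjn⟩ := mem_Icc.1 hj
    have hpow : lam ^ (j + 1 - p) ≤ lam ^ (n + 1) * lam⁻¹ ^ (n - j) := by
      rw [inv_pow, ← div_eq_mul_inv, le_div_iff₀ (by positivity), ← pow_add]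
      exact pow_le_pow_right₀ hlam.le (by omega)
    rw [norm_mul, norm_mul, Complex.norm_real, Real.norm_eq_abs, norm_pow, hη]
    calc |chooseDefect p n j| * lam ^ (j + 1 - p) * ‖a (n - j)‖ * n ^ 2
        = |chooseDefect p n j| * n ^ 2 * lam ^ (j + 1 - p) * ‖a (n - j)‖ := by ring
      _ ≤ (p + 2) * 2 ^ p * n ^ (2 * p) * (((n - j : ℕ) : ℝ) + 1)
            * (lam ^ (n + 1) * lam⁻¹ ^ (n - j)) * B := by
        have hdefect := abs_chooseDefect_mul_sq_le hpj hjn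
        have ha' := ha (n - j)
        gcongr ?_ * ?_ * ?_
      _ = _ := by ring
  calc ‖∑ j ∈ Icc p n, (chooseDefect p n j : ℂ) * η ^ (j + 1 - p) * a (n - j)‖ * n ^ 2
      ≤ (∑ j ∈ Icc p n, ‖(chooseDefect p n j : ℂ) * η ^ (j + 1 - p) * a (n - j)‖) * n ^ 2 :=
        by gcongr; exact norm_sum_le _ _
    _ ≤ ∑ j ∈ Icc p n, (p + 2) * 2 ^ p * B * n ^ (2 * p) * lam ^ (n + 1)
          * ((((n - j : ℕ) : ℝ) + 1) * lam⁻¹ ^ (n - j)) := by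
        rw [sum_mul]
        exact sum_le_sum hterm
    _ ≤ _ := by
        rw [← mul_sum]
        have hr : 0 ≤ lam⁻¹ := by positivity
        have hsummable := summable_add_one_mul_pow hr (inv_lt_one_of_one_lt₀ hlam)
        grw [sum_Icc_comp_sub_le_tsum hsummable (fun k => by positivity) p n]
        exact le_of_eq (by ring)

lemma norm_chooseAverage_succ_sub_le (hlam : 1 < lam) (hη : ‖η‖ = lam) (ha : ∀ k, ‖a k‖ ≤ B)
    {c : ℝ} (hc : ∀ k : ℕ, (k : ℝ) ^ 2 ≤ c * lam ^ k) {n : ℕ} (hn : p < n) :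
    ‖chooseAverage p lam η a (n + 1) - η / lam * chooseAverage p lam η a n‖
      ≤ (B * c + (p + 2) * 2 ^ p * B * ∑' k : ℕ, ((k : ℝ) + 1) * lam⁻¹ ^ k) / n ^ 2 := by
  have hB : 0 ≤ B := (norm_nonneg _).trans (ha 0)
  have hlam0 : 0 < lam := by linarith
  have hn0 : (0 : ℝ) < n := by norm_cast; omega
  set D : ℝ := n ^ p * (n + 1) ^ p * lam ^ (n + 1)
  have hD : 0 < D := by positivity
  have hdiff : chooseAverage p lam η a (n + 1) - η / lam * chooseAverage p lam η a n
      = (D : ℂ)⁻¹ * ((n : ℂ) ^ p * chooseConv p η a (n + 1)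
          - ((n : ℂ) + 1) ^ p * (η * chooseConv p η a n)) := by
    have hlamC : (lam : ℂ) ≠ 0 := by exact_mod_cast hlam0.ne'
    have hnC : (n : ℂ) ≠ 0 := by exact_mod_cast hn0.ne'
    have hn1C : (n : ℂ) + 1 ≠ 0 := by exact_mod_cast n.succ_ne_zero
    simp only [chooseAverage, D]
    push_cast
    field_simp
    ring
  rw [hdiff, norm_mul, norm_inv, Complex.norm_real, Real.norm_of_nonneg hD.le,
    pow_mul_chooseConv_succ_sub (by omega), inv_mul_le_iff₀ hD, mul_div_assoc',
    le_div_iff₀ (by positivity)]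
  have hsum := norm_sum_chooseDefect_mul_sq_le (p := p) hlam hη ha n
  set G := ∑' k : ℕ, ((k : ℝ) + 1) * lam⁻¹ ^ k
  have hc0 : 0 ≤ c := by simpa using hc 0
  have hsq : (n : ℝ) ^ 2 ≤ c * lam ^ (n + 1) :=
    calc (n : ℝ) ^ 2 ≤ ((n + 1 : ℕ) : ℝ) ^ 2 := by gcongr; omega
      _ ≤ c * lam ^ (n + 1) := hc (n + 1)
  have hboundary :
      ‖(n : ℂ) ^ p * a (n + 1 - p)‖ * n ^ 2 ≤ B * c * (n ^ p * lam ^ (n + 1)) := by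
    rw [norm_mul, norm_pow, Complex.norm_natCast]
    calc (n : ℝ) ^ p * ‖a (n + 1 - p)‖ * n ^ 2 ≤ n ^ p * B * (c * lam ^ (n + 1)) := by
          gcongr
          exact ha _
      _ = B * c * (n ^ p * lam ^ (n + 1)) := by ring
  have hD₁ : (n : ℝ) ^ p * lam ^ (n + 1) ≤ D := by
    have : (1 : ℝ) ≤ (n + 1) ^ p := one_le_pow₀ (by linarith)
    simp only [D]
    gcongr
    exact le_mul_of_one_le_right (by positivity) this
  have hD₂ : (n : ℝ) ^ (2 * p) * lam ^ (n + 1) ≤ D := by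
    simp only [D, two_mul, pow_add]
    gcongr
    linarith
  calc _ ≤ ‖(n : ℂ) ^ p * a (n + 1 - p)‖ * n ^ 2
        + ‖∑ j ∈ Icc p n, (chooseDefect p n j : ℂ) * η ^ (j + 1 - p) * a (n - j)‖ * n ^ 2 := by
        rw [← add_mul]
        gcongr
        exact norm_add_le _ _
    _ ≤ B * c * (n ^ p * lam ^ (n + 1))
        + (p + 2) * 2 ^ p * B * G * (n ^ (2 * p) * lam ^ (n + 1)) := by
        grw [hboundary, hsum]
        exact le_of_eq (by ring)
    _ ≤ D * (B * c + (p + 2) * 2 ^ p * B * G) := by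
        grw [hD₁, hD₂]
        exact le_of_eq (by ring)

end

theorem stmt7_general {K : Type*} (g : K → K) (u : K → ℂ)
    (hu : ∃ B : ℝ, ∀ x, ‖u x‖ ≤ B)
    (lam : ℝ) (hlam : 1 < lam) (η : ℂ) (hη : ‖η‖ = lam)
    (m : ℕ) (hm : 1 ≤ m)
    (v : ℕ → K → ℂ)
    (hv : ∀ n, m - 1 ≤ n → ∀ x, v n x =
      ((n : ℂ) ^ (m - 1) * (lam : ℂ) ^ n)⁻¹ *
        ∑ j ∈ Finset.Icc (m - 1) n,
          (j.choose (m - 1) : ℂ) * η ^ (j + 1 - m) * u (g^[n - j] x)) :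
    ∃ C : ℝ, 0 < C ∧ ∀ n : ℕ, m ≤ n → ∀ x,
      ‖v (n + 1) x - (η / (lam : ℂ)) * v n x‖ ≤ C / (n : ℝ) ^ 2 := by
  obtain ⟨B, hB⟩ := hu
  obtain ⟨c, hc⟩ := exists_sq_le_mul_pow hlam
  obtain ⟨p, rfl⟩ : ∃ p, m = p + 1 := ⟨m - 1, by omega⟩
  have hv' : ∀ n, p ≤ n → ∀ x, v n x = chooseAverage p lam η (fun k => u (g^[k] x)) n := by
    intro n hn x
    rw [hv n (by simpa using hn) x]
    simp only [chooseAverage, chooseConv, Nat.add_sub_cancel, Nat.add_sub_add_right]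
  refine ⟨max (B * c + (p + 2) * 2 ^ p * B * ∑' k : ℕ, ((k : ℝ) + 1) * lam⁻¹ ^ k) 1,
    by positivity, fun n hn x => ?_⟩
  rw [hv' (n + 1) (by omega), hv' n (by omega)]
  calc _ ≤ _ := norm_chooseAverage_succ_sub_le hlam hη (fun k => hB _) hc (by omega)
    _ ≤ _ := by gcongr; exact le_max_left _ _

theorem stmt7 {K : Type*} [Nonempty K] (g : K → K) (u : K → ℂ)
    (hu : ∃ B : ℝ, ∀ x, ‖u x‖ ≤ B)
    (lam : ℝ) (hlam : 1 < lam) (η : ℂ) (hη : ‖η‖ = lam)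
    (m : ℕ) (hm : 1 ≤ m)
    (v : ℕ → K → ℂ)
    (hv : ∀ n, m - 1 ≤ n → ∀ x, v n x =
      ((n : ℂ) ^ (m - 1) * (lam : ℂ) ^ n)⁻¹ *
        ∑ j ∈ Finset.Icc (m - 1) n,
          (j.choose (m - 1) : ℂ) * η ^ (j + 1 - m) * u (g^[n - j] x)) :
    ∃ C : ℝ, 0 < C ∧ ∀ n : ℕ, m ≤ n → ∀ x,
      ‖v (n + 1) x - (η / (lam : ℂ)) * v n x‖ ≤ C / (n : ℝ) ^ 2 :=
  stmt7_general g u hu lam hlam η hη m hm v hv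
end

section
/- Let K be a metric space, M > 1 a real number, and g : K → K a map with dist(g(x), g(y)) ≤ M·dist(x, y) for all x, y ∈ K. Let ν > 0 and let u : K → ℂ be bounded and ν-Hölder continuous, i.e. there is c ≥ 0 with |u(x) − u(y)| ≤ c·dist(x, y)^ν for all x, y. Let λ > 1 be real, η ∈ ℂ with |η| = λ, and m ≥ 1 an integer. For j ≥ m−1 set s_j := C(j, m−1)·η^{j−m+1}, and for n ≥ m−1 and x ∈ K define v_n(x) := (1/(n^{m−1}·λ^n))·Σ_{j=m−1}^{n} s_j·u(g^{n−j}(x)). Let v : K → ℂ be the uniform limit of the functions (λ/η)^n·v_n. Then for every ν' > 0 with ν' ≤ ν and ν' < log λ / log M, the function v is ν'-Hölder continuous, i.e. there is c' ≥ 0 with |v(x) − v(y)| ≤ c'·dist(x, y)^{ν'} for all x, y ∈ K. -/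
/-!
The `n`-th twisted average is a combination of the functions `u ∘ g^[n - j]` whose coefficients,
after normalisation by `n ^ (m - 1) * λ ^ n`, are at most `λ ^ -(n - j)` in size. Since `u` is
`ν'`-Hölder and `g^[i]` is `M ^ i`-Lipschitz, `u ∘ g^[i]` is `ν'`-Hölder with constant
`C * (M ^ ν') ^ i`, so the Hölder constants of the averages are bounded by a geometric series in
`M ^ ν' / λ`, which converges exactly when `ν' < log λ / log M`. The bound passes to the limit.
-/

open Finset

section Holder

variable {X E : Type*} [PseudoMetricSpace X] [SeminormedAddCommGroup E]

/-- Lowering the Hölder exponent costs nothing at small distances and is paid for by the bound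
on `u` at large ones. -/
theorem norm_sub_le_mul_rpow_of_bounded {u : X → E} {B c ν ν' : ℝ} (hB : ∀ x, ‖u x‖ ≤ B)
    (hu : ∀ x y, ‖u x - u y‖ ≤ c * dist x y ^ ν) (hc : 0 ≤ c) (hν' : 0 < ν')
    (hν'ν : ν' ≤ ν) (x y : X) :
    ‖u x - u y‖ ≤ max c (2 * B) * dist x y ^ ν' := by
  rcases le_or_gt (dist x y) 1 with hd | hd
  · calc ‖u x - u y‖ ≤ c * dist x y ^ ν := hu x y
      _ ≤ c * dist x y ^ ν' :=
        mul_le_mul_of_nonneg_left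
          (Real.rpow_le_rpow_of_exponent_ge' dist_nonneg hd hν'.le hν'ν) hc
      _ ≤ max c (2 * B) * dist x y ^ ν' := by gcongr; exact le_max_left _ _
  · calc ‖u x - u y‖ ≤ ‖u x‖ + ‖u y‖ := norm_sub_le _ _
      _ ≤ 2 * B := by linarith [hB x, hB y]
      _ ≤ max c (2 * B) * 1 := by rw [mul_one]; exact le_max_right _ _
      _ ≤ max c (2 * B) * dist x y ^ ν' := by
        gcongr
        exact Real.one_le_rpow hd.le hν'.le

theorem norm_sub_iterate_le {u : X → E} {g : X → X} {C M ν : ℝ} (hC : 0 ≤ C) (hM : 0 ≤ M)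
    (hν : 0 ≤ ν) (hu : ∀ x y, ‖u x - u y‖ ≤ C * dist x y ^ ν)
    (hg : ∀ x y, dist (g x) (g y) ≤ M * dist x y) (i : ℕ) (x y : X) :
    ‖u (g^[i] x) - u (g^[i] y)‖ ≤ C * (M ^ ν) ^ i * dist x y ^ ν := by
  have hgi : dist (g^[i] x) (g^[i] y) ≤ M ^ i * dist x y := by
    simpa [Real.coe_toNNReal _ hM] using
      ((LipschitzWith.of_dist_le' hg).iterate i).dist_le_mul x y
  calc ‖u (g^[i] x) - u (g^[i] y)‖ ≤ C * dist (g^[i] x) (g^[i] y) ^ ν := hu _ _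
    _ ≤ C * (M ^ i * dist x y) ^ ν := by gcongr
    _ = C * (M ^ ν) ^ i * dist x y ^ ν := by
      rw [Real.mul_rpow (by positivity) dist_nonneg, Real.rpow_pow_comm hM, mul_assoc]

end Holder

theorem choose_mul_pow_mul_pow_le {m n j : ℕ} {lam ρ : ℝ} (hm : 1 ≤ m)
    (hj : j ∈ Icc (m - 1) n) (hlam : 1 ≤ lam) (hρ : 0 ≤ ρ) :
    (j.choose (m - 1) : ℝ) * lam ^ (j + 1 - m) * ρ ^ (n - j) ≤
      n ^ (m - 1) * lam ^ n * (ρ / lam) ^ (n - j) := by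
  obtain ⟨hmj, hjn⟩ := mem_Icc.mp hj
  have hchoose : (j.choose (m - 1) : ℝ) ≤ n ^ (m - 1) := by
    exact_mod_cast (Nat.choose_le_choose _ hjn).trans (Nat.choose_le_pow _ _)
  have hpow : lam ^ (j + 1 - m) * lam ^ (n - j) ≤ lam ^ n := by
    rw [← pow_add]
    exact pow_le_pow_right₀ hlam (by omega)
  have hlam0 : lam ≠ 0 := by positivity
  calc (j.choose (m - 1) : ℝ) * lam ^ (j + 1 - m) * ρ ^ (n - j)
      = j.choose (m - 1) * (lam ^ (j + 1 - m) * lam ^ (n - j)) * (ρ / lam) ^ (n - j) := by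
        rw [div_pow]
        field_simp
    _ ≤ n ^ (m - 1) * lam ^ n * (ρ / lam) ^ (n - j) := by gcongr

theorem sum_Icc_pow_sub_le {r : ℝ} (hr0 : 0 ≤ r) (hr1 : r < 1) (a n : ℕ) :
    ∑ j ∈ Icc a n, r ^ (n - j) ≤ (1 - r)⁻¹ := by
  rw [← Ico_add_one_right_eq_Icc, sum_Ico_reflect _ _ le_rfl]
  simpa using geom_sum_Ico_le_of_lt_one (m := 0) (n := n + 1 - a) hr0 hr1

/-- The function `v_n` of the single Jordan block reduction, with `λ = lam`. -/
noncomputable def jordanAverage {X : Type*} (g : X → X) (u : X → ℂ) (lam : ℝ) (η : ℂ)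
    (m n : ℕ) (x : X) : ℂ :=
  ((n : ℂ) ^ (m - 1) * (lam : ℂ) ^ n)⁻¹ *
    ∑ j ∈ Icc (m - 1) n, (j.choose (m - 1) : ℂ) * η ^ (j + 1 - m) * u (g^[n - j] x)

theorem norm_jordanAverage_sub_le {X : Type*} [PseudoMetricSpace X] {g : X → X} {u : X → ℂ}
    {C M ν lam : ℝ} {η : ℂ} {m : ℕ} (hC : 0 ≤ C) (hM : 0 ≤ M) (hν : 0 ≤ ν) (hlam : 1 ≤ lam)
    (hη : ‖η‖ = lam) (hm : 1 ≤ m) (hMlam : M ^ ν < lam)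
    (hu : ∀ x y, ‖u x - u y‖ ≤ C * dist x y ^ ν)
    (hg : ∀ x y, dist (g x) (g y) ≤ M * dist x y) (n : ℕ) (x y : X) :
    ‖jordanAverage g u lam η m n x - jordanAverage g u lam η m n y‖ ≤
      C * (1 - M ^ ν / lam)⁻¹ * dist x y ^ ν := by
  set r := M ^ ν / lam
  set A : ℝ := (n : ℝ) ^ (m - 1) * lam ^ n
  set D := C * dist x y ^ ν
  have hr0 : 0 ≤ r := by positivity
  have hr1 : r < 1 := (div_lt_one (by linarith)).2 hMlam
  have hA : 0 ≤ A := by positivity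
  have hterm : ∀ j ∈ Icc (m - 1) n,
      ‖(j.choose (m - 1) : ℂ) * η ^ (j + 1 - m) * (u (g^[n - j] x) - u (g^[n - j] y))‖ ≤
        A * r ^ (n - j) * D := by
    intro j hj
    rw [norm_mul, norm_mul, norm_pow, hη, Complex.norm_natCast]
    calc _ ≤ (j.choose (m - 1) : ℝ) * lam ^ (j + 1 - m) *
          (C * (M ^ ν) ^ (n - j) * dist x y ^ ν) := by
          gcongr
          exact norm_sub_iterate_le hC hM hν hu hg _ x y
      _ = (j.choose (m - 1) : ℝ) * lam ^ (j + 1 - m) * (M ^ ν) ^ (n - j) * D := by ring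
      _ ≤ A * r ^ (n - j) * D := by
          gcongr ?_ * D
          exact choose_mul_pow_mul_pow_le hm hj hlam (by positivity)
  have hnorm : ‖((n : ℂ) ^ (m - 1) * (lam : ℂ) ^ n)⁻¹‖ = A⁻¹ := by
    simp [A, abs_of_nonneg (zero_le_one.trans hlam)]
  unfold jordanAverage
  rw [← mul_sub, ← sum_sub_distrib, norm_mul, hnorm]
  simp_rw [← mul_sub]
  -- `A⁻¹ * A ≤ 1` also covers the junk case `A = 0`.
  calc A⁻¹ * _ ≤ A⁻¹ * ∑ j ∈ Icc (m - 1) n, A * r ^ (n - j) * D := by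
        gcongr
        exact norm_sum_le_of_le _ hterm
    _ = A⁻¹ * A * (∑ j ∈ Icc (m - 1) n, r ^ (n - j)) * D := by
        rw [← sum_mul, ← mul_sum]
        ring
    _ ≤ 1 * (1 - r)⁻¹ * D := by
        gcongr
        · exact inv_mul_le_one_of_le₀ le_rfl hA
        · exact sum_Icc_pow_sub_le hr0 hr1 _ _
    _ = C * (1 - r)⁻¹ * dist x y ^ ν := by ring

theorem stmt8_general {K : Type*} [MetricSpace K]
    (M : ℝ) (hM : 1 < M) (g : K → K)
    (hg : ∀ x y : K, dist (g x) (g y) ≤ M * dist x y)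
    (ν : ℝ) (u : K → ℂ)
    (hu_bdd : ∃ B : ℝ, ∀ x, ‖u x‖ ≤ B)
    (hu_hold : ∃ c : ℝ, 0 ≤ c ∧ ∀ x y : K, ‖u x - u y‖ ≤ c * dist x y ^ ν)
    (lam : ℝ) (hlam : 1 < lam) (η : ℂ) (hη : ‖η‖ = lam)
    (m : ℕ) (hm : 1 ≤ m)
    (v : ℕ → K → ℂ)
    (hv : ∀ n, m - 1 ≤ n → ∀ x, v n x =
      ((n : ℂ) ^ (m - 1) * (lam : ℂ) ^ n)⁻¹ *
        ∑ j ∈ Finset.Icc (m - 1) n,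
          (j.choose (m - 1) : ℂ) * η ^ (j + 1 - m) * u (g^[n - j] x))
    (vlim : K → ℂ)
    (hvlim : TendstoUniformly (fun n x => ((lam : ℂ) / η) ^ n * v n x) vlim
      Filter.atTop) :
    ∀ ν' : ℝ, 0 < ν' → ν' ≤ ν → ν' < Real.log lam / Real.log M →
      ∃ c' : ℝ, 0 ≤ c' ∧ ∀ x y : K, ‖vlim x - vlim y‖ ≤ c' * dist x y ^ ν' := by
  intro ν' hν' hν'ν hν'log
  obtain ⟨B, hB⟩ := hu_bdd
  obtain ⟨c, hc, hu⟩ := hu_hold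
  have hlam0 : 0 < lam := by linarith
  have hMν' : M ^ ν' < lam := by
    rwa [Real.rpow_lt_iff_lt_log (by linarith) hlam0, ← lt_div_iff₀ (Real.log_pos hM)]
  have hC : 0 ≤ max c (2 * B) := hc.trans (le_max_left _ _)
  have hr : 0 ≤ (1 - M ^ ν' / lam)⁻¹ :=
    inv_nonneg.2 (sub_nonneg.2 ((div_lt_one hlam0).2 hMν').le)
  refine ⟨max c (2 * B) * (1 - M ^ ν' / lam)⁻¹, mul_nonneg hC hr, fun x y => ?_⟩
  have hunit : ∀ n : ℕ, ‖((lam : ℂ) / η) ^ n‖ = 1 := by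
    simp [hη, abs_of_pos hlam0, hlam0.ne']
  refine le_of_tendsto ((hvlim.tendsto_at x).sub (hvlim.tendsto_at y)).norm ?_
  filter_upwards [Filter.eventually_ge_atTop (m - 1)] with n hn
  rw [← mul_sub, norm_mul, hunit, one_mul, hv n hn x, hv n hn y]
  exact norm_jordanAverage_sub_le hC (by linarith) hν'.le hlam.le hη hm hMν'
    (norm_sub_le_mul_rpow_of_bounded hB hu hc hν' hν'ν) hg n x y

theorem stmt8 {K : Type*} [MetricSpace K] [Nonempty K]
    (M : ℝ) (hM : 1 < M) (g : K → K)
    (hg : ∀ x y : K, dist (g x) (g y) ≤ M * dist x y)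
    (ν : ℝ) (hν : 0 < ν) (u : K → ℂ)
    (hu_bdd : ∃ B : ℝ, ∀ x, ‖u x‖ ≤ B)
    (hu_hold : ∃ c : ℝ, 0 ≤ c ∧ ∀ x y : K, ‖u x - u y‖ ≤ c * dist x y ^ ν)
    (lam : ℝ) (hlam : 1 < lam) (η : ℂ) (hη : ‖η‖ = lam)
    (m : ℕ) (hm : 1 ≤ m)
    (v : ℕ → K → ℂ)
    (hv : ∀ n, m - 1 ≤ n → ∀ x, v n x =
      ((n : ℂ) ^ (m - 1) * (lam : ℂ) ^ n)⁻¹ *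
        ∑ j ∈ Finset.Icc (m - 1) n,
          (j.choose (m - 1) : ℂ) * η ^ (j + 1 - m) * u (g^[n - j] x))
    (vlim : K → ℂ)
    (hvlim : TendstoUniformly (fun n x => ((lam : ℂ) / η) ^ n * v n x) vlim
      Filter.atTop) :
    ∀ ν' : ℝ, 0 < ν' → ν' ≤ ν → ν' < Real.log lam / Real.log M →
      ∃ c' : ℝ, 0 ≤ c' ∧ ∀ x y : K, ‖vlim x - vlim y‖ ≤ c' * dist x y ^ ν' :=
  stmt8_general M hM g hg ν u hu_bdd hu_hold lam hlam η hη m hm v hv vlim hvlim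
end

section
/- Let K be a nonempty set, g : K → K a map, and u : K → ℂ a bounded function. Let λ > 1 be real, η ∈ ℂ with |η| = λ, and m ≥ 1 an integer. For j ≥ m−1 set s_j := C(j, m−1)·η^{j−m+1}, and for n ≥ m−1 and x ∈ K define v_n(x) := (1/(n^{m−1}·λ^n))·Σ_{j=m−1}^{n} s_j·u(g^{n−j}(x)), and for N ≥ m define w_N := (1/N)·Σ_{n=m−1}^{N} v_n. Then there exist a bounded function w : K → ℂ and a constant C > 0 such that sup_{x∈K} |w_N(x) − w(x)| ≤ C·(log N)/N for every integer N ≥ 2; moreover w = 0 if η ≠ λ, and w equals the uniform limit v of the sequence ((λ/η)^n v_n) if η = λ. -/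
/-!
With `p = m - 1`, `ζ = η⁻¹` and `k = n - j`, one has
`v_n = (η/λ)^n ∑_k (C(n-k, p) / n^p) ζ^(k+p) u(g^k x)`. The weights `C(n-k, p) / n^p` differ from
their limit `1/p!` by `O((k+1)/n)` and the terms decay like `λ^(-k)`, so `v_n = (η/λ)^n v + O(1/n)`
uniformly in `x`. Averaging, the errors contribute `O(log N / N)`, while `∑_{n ≤ N} (η/λ)^n` is
`N + O(1)` if `η = λ` and `O(1)` otherwise, because `|η/λ| = 1`.
-/

open Finset Filter Topology
open scoped Nat

theorem abs_choose_div_pow_sub_inv_factorial_le {p n k : ℕ} (h : k + p ≤ n) (hn : 0 < n) :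
    |((n - k).choose p : ℝ) / (n : ℝ) ^ p - (p ! : ℝ)⁻¹| ≤ p * (k + p) / n := by
  have hn' : (0 : ℝ) < n := by exact_mod_cast hn
  have hF : (1 : ℝ) ≤ p ! := by exact_mod_cast Nat.one_le_iff_ne_zero.mpr (Nat.factorial_ne_zero p)
  have hP : (0 : ℝ) < (n : ℝ) ^ p := by positivity
  set t : ℝ := (k + p) / n
  have ht : t ≤ 1 := by
    rw [div_le_one hn']; exact_mod_cast h
  have hupper : (p ! : ℝ) * (n - k).choose p ≤ (n : ℝ) ^ p := by
    have := Nat.choose_le_pow_div (α := ℝ) p (n - k)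
    rw [le_div_iff₀ (by positivity)] at this
    calc (p ! : ℝ) * (n - k).choose p ≤ ((n - k : ℕ) : ℝ) ^ p := by linarith
      _ ≤ (n : ℝ) ^ p := by gcongr; exact_mod_cast Nat.sub_le n k
  have hlower : (n : ℝ) ^ p * (1 - p * t) ≤ (p ! : ℝ) * (n - k).choose p := by
    have hchoose := Nat.pow_le_choose (α := ℝ) p (n - k)
    rw [div_le_iff₀ (by positivity)] at hchoose
    have hbase : (n : ℝ) * (1 - t) ≤ ((n - k + 1 - p : ℕ) : ℝ) := by
      rw [mul_sub, mul_one, mul_div_cancel₀ _ hn'.ne']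
      push_cast [show p ≤ n - k + 1 by omega, show k ≤ n by omega]
      linarith
    calc (n : ℝ) ^ p * (1 - p * t) = (n : ℝ) ^ p * (1 + p * (-t)) := by ring
      _ ≤ (n : ℝ) ^ p * (1 + -t) ^ p := by gcongr; exact one_add_mul_le_pow (by linarith) p
      _ = ((n : ℝ) * (1 - t)) ^ p := by rw [mul_pow]; ring
      _ ≤ ((n - k + 1 - p : ℕ) : ℝ) ^ p := by gcongr
      _ ≤ _ := by linarith
  have hx_upper : ((n - k).choose p : ℝ) / (n : ℝ) ^ p ≤ (p ! : ℝ)⁻¹ := by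
    rw [div_le_iff₀ hP, inv_mul_eq_div, le_div_iff₀ (by positivity)]; linarith
  have hx_lower : (1 - p * t) / p ! ≤ ((n - k).choose p : ℝ) / (n : ℝ) ^ p := by
    rw [div_le_div_iff₀ (by positivity) hP]; linarith
  have hpt : 0 ≤ p * t := by positivity
  rw [mul_div_assoc, abs_sub_comm, abs_of_nonneg (by linarith)]
  calc (p ! : ℝ)⁻¹ - ((n - k).choose p : ℝ) / (n : ℝ) ^ p ≤ p * t / p ! := by
        rw [sub_div, one_div] at hx_lower; linarith
    _ ≤ p * t := div_le_self hpt hF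

/-- The weight of `ζ^(k+p) u(g^k x)` in `v_n` after the substitution `k = n - j`. -/
noncomputable def jordanWeight (p n k : ℕ) : ℝ :=
  if k + p ≤ n then ((n - k).choose p : ℝ) / (n : ℝ) ^ p else 0

theorem abs_jordanWeight_sub_inv_factorial_le (p n k : ℕ) :
    |jordanWeight p n k - (p ! : ℝ)⁻¹| ≤ (p + 1) * (k + p + 1) / (n + 1) := by
  have hF : (1 : ℝ) ≤ p ! := by exact_mod_cast Nat.one_le_iff_ne_zero.mpr (Nat.factorial_ne_zero p)
  unfold jordanWeight
  split_ifs with h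
  · rcases Nat.eq_zero_or_pos n with rfl | hn
    · obtain ⟨rfl, rfl⟩ : k = 0 ∧ p = 0 := by omega
      norm_num
    · refine (abs_choose_div_pow_sub_inv_factorial_le h hn).trans ?_
      have hkpn : (k : ℝ) + p ≤ n := by exact_mod_cast h
      rw [div_le_div_iff₀ (by positivity) (by positivity)]
      nlinarith
  · have hlt : (n : ℝ) + 1 ≤ k + p := by exact_mod_cast (by omega : n + 1 ≤ k + p)
    rw [zero_sub, abs_neg, abs_of_pos (by positivity), le_div_iff₀ (by positivity)]
    calc (p ! : ℝ)⁻¹ * (n + 1) ≤ 1 * (k + p) := by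
          gcongr
          exact inv_le_one_of_one_le₀ hF
      _ ≤ (p + 1) * (k + p + 1) := by nlinarith

theorem norm_tsum_jordanWeight_smul_sub_le {E : Type*} [NormedAddCommGroup E] [NormedSpace ℝ E]
    [CompleteSpace E] {f : ℕ → E} {B r : ℝ} (hr0 : 0 ≤ r) (hr1 : r < 1)
    (hf : ∀ k, ‖f k‖ ≤ B * r ^ k) (p n : ℕ) :
    ‖∑' k, jordanWeight p n k • f k - (p ! : ℝ)⁻¹ • ∑' k, f k‖ ≤
      (p + 1) * B * (r / (1 - r) ^ 2 + (p + 1) / (1 - r)) / (n + 1) := by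
  set c : ℝ := (p + 1) * B / (n + 1)
  have hB : 0 ≤ B := by simpa using (norm_nonneg _).trans (hf 0)
  have hg : HasSum (fun k : ℕ => c * ((k + (p + 1)) * r ^ k))
      (c * (r / (1 - r) ^ 2 + (p + 1) * (1 - r)⁻¹)) := by
    have hr : ‖r‖ < 1 := by rwa [Real.norm_of_nonneg hr0]
    refine ((hasSum_coe_mul_geometric_of_norm_lt_one hr).add
      ((hasSum_geometric_of_lt_one hr0 hr1).mul_left ((p : ℝ) + 1))).mul_left c |>.congr_fun ?_
    intro k; ring
  have hbound : ∀ k, ‖(jordanWeight p n k - (p ! : ℝ)⁻¹) • f k‖ ≤ c * ((k + (p + 1)) * r ^ k) := by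
    intro k
    rw [norm_smul, Real.norm_eq_abs]
    calc |jordanWeight p n k - (p ! : ℝ)⁻¹| * ‖f k‖
        ≤ (p + 1) * (k + p + 1) / (n + 1) * (B * r ^ k) := by
          gcongr
          · exact abs_jordanWeight_sub_inv_factorial_le p n k
          · exact hf k
      _ = c * ((k + (p + 1)) * r ^ k) := by ring
  have hfs : Summable f :=
    .of_norm_bounded ((summable_geometric_of_lt_one hr0 hr1).mul_left B) hf
  have hds := Summable.of_norm_bounded hg.summable hbound
  have hws : Summable fun k => jordanWeight p n k • f k :=
    (hds.add (hfs.const_smul (p ! : ℝ)⁻¹)).congr fun k => by simp only [sub_smul, sub_add_cancel]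
  calc ‖∑' k, jordanWeight p n k • f k - (p ! : ℝ)⁻¹ • ∑' k, f k‖
      = ‖∑' k, (jordanWeight p n k - (p ! : ℝ)⁻¹) • f k‖ := by
        simp only [sub_smul]
        rw [hws.tsum_sub (hfs.const_smul _), hfs.tsum_const_smul]
    _ ≤ c * (r / (1 - r) ^ 2 + (p + 1) * (1 - r)⁻¹) := tsum_of_norm_bounded hg hbound
    _ = _ := by ring

/-- The function `v_n` of the Jordan block of size `p + 1`, evaluated along a sequence `F`. -/
noncomputable def jordanSum (lam : ℝ) (η : ℂ) (p n : ℕ) (F : ℕ → ℂ) : ℂ :=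
  ((n : ℂ) ^ p * (lam : ℂ) ^ n)⁻¹ * ∑ j ∈ Icc p n, (j.choose p : ℂ) * η ^ (j - p) * F (n - j)

theorem jordanSum_eq_tsum (lam : ℝ) {η : ℂ} (hη : η ≠ 0) {p n : ℕ} (hn : p ≤ n)
    (F : ℕ → ℂ) :
    jordanSum lam η p n F = (η / lam) ^ n * ∑' k, jordanWeight p n k • (η⁻¹ ^ (k + p) * F k) := by
  have hsupp : ∀ k ∉ range (n - p + 1), jordanWeight p n k • (η⁻¹ ^ (k + p) * F k) = 0 := by
    intro k hk
    rw [mem_range] at hk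
    simp [jordanWeight, show ¬ k + p ≤ n by omega]
  rw [tsum_eq_sum hsupp, jordanSum, mul_sum, mul_sum]
  symm
  refine sum_nbij' (fun k => n - k) (fun j => n - j) ?_ ?_ ?_ ?_ ?_ <;>
    simp only [mem_range, mem_Icc]
  · intro k hk; omega
  · intro j hj; omega
  · intro k hk; omega
  · intro j hj; omega
  · intro k hk
    have hkp : k + p ≤ n := by omega
    rw [jordanWeight, if_pos hkp, Nat.sub_sub_self (by omega), Complex.real_smul]
    have hpow : η ^ n = η ^ (n - k - p) * η ^ (k + p) := by rw [← pow_add]; congr 1; omega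
    have hcancel : η ^ (k + p) * η⁻¹ ^ (k + p) = 1 := by
      rw [← mul_pow, mul_inv_cancel₀ hη, one_pow]
    rw [div_pow, hpow]
    push_cast
    linear_combination ((n - k).choose p * η ^ (n - k - p) * F k / (n ^ p * lam ^ n) : ℂ) * hcancel

/-- The uniform limit of `(λ/η)^n v_n`, the weights having been replaced by their limit `1/p!`. -/
noncomputable def jordanLimit (η : ℂ) (p : ℕ) (F : ℕ → ℂ) : ℂ :=
  (p ! : ℝ)⁻¹ • ∑' k, η⁻¹ ^ (k + p) * F k

theorem norm_inv_pow_add_mul_le {η : ℂ} (hη : 1 ≤ ‖η‖) {B : ℝ} {F : ℕ → ℂ}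
    (hF : ∀ k, ‖F k‖ ≤ B) (p k : ℕ) : ‖η⁻¹ ^ (k + p) * F k‖ ≤ B * ‖η‖⁻¹ ^ k := by
  rw [norm_mul, norm_pow, norm_inv, mul_comm]
  exact mul_le_mul (hF k) (pow_le_pow_of_le_one (by positivity) (inv_le_one_of_one_le₀ hη)
    (by omega)) (by positivity) ((norm_nonneg _).trans (hF 0))

theorem norm_jordanLimit_le {η : ℂ} (hη : 1 < ‖η‖) {B : ℝ} {F : ℕ → ℂ} (hF : ∀ k, ‖F k‖ ≤ B)
    (p : ℕ) : ‖jordanLimit η p F‖ ≤ B * (1 - ‖η‖⁻¹)⁻¹ := by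
  have hF' : (1 : ℝ) ≤ p ! := by exact_mod_cast Nat.one_le_iff_ne_zero.mpr (Nat.factorial_ne_zero p)
  rw [jordanLimit, norm_smul, norm_inv, Real.norm_natCast]
  calc (p ! : ℝ)⁻¹ * ‖∑' k, η⁻¹ ^ (k + p) * F k‖ ≤ 1 * (B * (1 - ‖η‖⁻¹)⁻¹) := by
        gcongr
        · exact inv_le_one_of_one_le₀ hF'
        · exact tsum_of_norm_bounded ((hasSum_geometric_of_lt_one (by positivity)
            (inv_lt_one_of_one_lt₀ hη)).mul_left B) (norm_inv_pow_add_mul_le hη.le hF p)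
    _ = B * (1 - ‖η‖⁻¹)⁻¹ := one_mul _

theorem norm_jordanSum_sub_jordanLimit_le {lam : ℝ} {η : ℂ} (hlam : 1 < lam) (hη : ‖η‖ = lam)
    {B : ℝ} {F : ℕ → ℂ} (hF : ∀ k, ‖F k‖ ≤ B) {p n : ℕ} (hn : p ≤ n) :
    ‖jordanSum lam η p n F - (η / lam) ^ n * jordanLimit η p F‖ ≤
      (p + 1) * B * (lam⁻¹ / (1 - lam⁻¹) ^ 2 + (p + 1) / (1 - lam⁻¹)) / (n + 1) := by
  have hη0 : η ≠ 0 := by rintro rfl; simp at hη; linarith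
  have hμ : ‖η / lam‖ = 1 := by
    rw [norm_div, hη, Complex.norm_real, Real.norm_of_nonneg (by linarith), div_self (by linarith)]
  rw [jordanSum_eq_tsum lam hη0 hn, jordanLimit, ← mul_sub, norm_mul, norm_pow, hμ, one_pow, one_mul]
  refine norm_tsum_jordanWeight_smul_sub_le (by positivity) (inv_lt_one_of_one_lt₀ hlam) ?_ p n
  intro k
  rw [← hη]
  exact norm_inv_pow_add_mul_le (by linarith) hF p k

theorem norm_sum_Icc_sub_geom_smul_le {E : Type*} [NormedAddCommGroup E] [NormedSpace ℂ E]
    {a : ℕ → E} {L : E} {μ : ℂ} {C : ℝ} {p : ℕ} (hC : 0 ≤ C)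
    (ha : ∀ n, p ≤ n → ‖a n - μ ^ n • L‖ ≤ C / (n + 1)) (N : ℕ) :
    ‖∑ n ∈ Icc p N, a n - (∑ n ∈ Icc p N, μ ^ n) • L‖ ≤ C * (1 + Real.log (N + 1)) := by
  rw [sum_smul, ← sum_sub_distrib]
  calc _ ≤ ∑ n ∈ Icc p N, ‖a n - μ ^ n • L‖ := norm_sum_le _ _
    _ ≤ ∑ n ∈ Icc p N, C / (n + 1) := sum_le_sum fun n hn => ha n (mem_Icc.1 hn).1
    _ ≤ ∑ n ∈ range (N + 1), C / (n + 1) :=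
        sum_le_sum_of_subset_of_nonneg (fun n hn => by simp only [mem_Icc, mem_range] at hn ⊢; omega)
          fun _ _ _ => by positivity
    _ = C * harmonic (N + 1) := by simp [harmonic, mul_sum, div_eq_mul_inv]
    _ ≤ C * (1 + Real.log (N + 1)) := by
        gcongr
        exact_mod_cast harmonic_le_one_add_log (N + 1)

theorem norm_geom_sum_Icc_sub_le {μ : ℂ} (hμ : ‖μ‖ = 1) {p N : ℕ} (hpN : p ≤ N) :
    ‖∑ n ∈ Icc p N, μ ^ n - (if μ = 1 then (N : ℂ) else 0)‖ ≤
      if μ = 1 then (p : ℝ) + 1 else 2 / ‖μ - 1‖ := by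
  split_ifs with h
  · subst h
    simp only [one_pow, sum_const, Nat.card_Icc, nsmul_eq_mul, mul_one]
    rw [Nat.cast_sub (by omega)]
    push_cast
    calc ‖(N : ℂ) + 1 - p - N‖ = ‖(1 : ℂ) - p‖ := by ring_nf
      _ ≤ ‖(1 : ℂ)‖ + ‖(p : ℂ)‖ := norm_sub_le _ _
      _ = p + 1 := by simp [add_comm]
  · rw [sub_zero, ← Ico_add_one_right_eq_Icc, geom_sum_Ico h (by omega), norm_div]
    gcongr
    calc ‖μ ^ (N + 1) - μ ^ p‖ ≤ ‖μ ^ (N + 1)‖ + ‖μ ^ p‖ := norm_sub_le _ _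
      _ = 2 := by simp [hμ]; norm_num

theorem exists_pos_add_mul_one_add_log_succ_le (A : ℝ) {C : ℝ} (hC : 0 ≤ C) :
    ∃ C' > 0, ∀ N : ℕ, 2 ≤ N → A + C * (1 + Real.log (N + 1)) ≤ C' * Real.log N := by
  have hlog2 : 0 < Real.log 2 := Real.log_pos one_lt_two
  refine ⟨(|A| + C) / Real.log 2 + 2 * C + 1, by positivity, fun N hN => ?_⟩
  have hN : (2 : ℝ) ≤ N := by exact_mod_cast hN
  have h2N : Real.log 2 ≤ Real.log N := Real.log_le_log two_pos hN
  have hsucc : Real.log (N + 1) ≤ 2 * Real.log N := by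
    calc Real.log (N + 1) ≤ Real.log ((N : ℝ) ^ 2) := Real.log_le_log (by positivity) (by nlinarith)
      _ = 2 * Real.log N := by rw [Real.log_pow]; norm_num
  have hA : |A| + C ≤ (|A| + C) / Real.log 2 * Real.log N := by
    rw [div_mul_eq_mul_div, le_div_iff₀ hlog2]
    nlinarith [abs_nonneg A]
  nlinarith [le_abs_self A, mul_le_mul_of_nonneg_left hsucc hC]

theorem exists_norm_cesaro_sub_le {K E : Type*} [NormedAddCommGroup E] [NormedSpace ℂ E]
    {a : ℕ → K → E} {L : K → E} {BL C : ℝ} (hL : ∀ x, ‖L x‖ ≤ BL) (hC : 0 ≤ C)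
    {μ : ℂ} (hμ : ‖μ‖ = 1) {p : ℕ} (ha : ∀ n, p ≤ n → ∀ x, ‖a n x - μ ^ n • L x‖ ≤ C / (n + 1)) :
    ∃ C' > 0, ∀ N, 2 ≤ N → p ≤ N → ∀ x,
      ‖(N : ℂ)⁻¹ • ∑ n ∈ Icc p N, a n x - (if μ = 1 then L x else 0)‖ ≤
        C' * Real.log N / N := by
  set G : ℝ := if μ = 1 then (p : ℝ) + 1 else 2 / ‖μ - 1‖
  have hG : 0 ≤ G := by simp only [G]; split_ifs <;> positivity
  obtain ⟨C', hC', hlog⟩ := exists_pos_add_mul_one_add_log_succ_le (G * BL) hC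
  refine ⟨C', hC', fun N hN hpN x => ?_⟩
  have hN0 : (N : ℂ) ≠ 0 := by exact_mod_cast (by omega : N ≠ 0)
  set S := ∑ n ∈ Icc p N, μ ^ n
  have hsplit : (N : ℂ)⁻¹ • ∑ n ∈ Icc p N, a n x - (if μ = 1 then L x else 0) =
      (N : ℂ)⁻¹ • ((∑ n ∈ Icc p N, a n x - S • L x) +
        (S - if μ = 1 then (N : ℂ) else 0) • L x) := by
    split_ifs <;> simp [smul_sub, sub_smul, smul_smul, inv_mul_cancel₀ hN0]
  rw [hsplit, norm_smul, norm_inv, Complex.norm_natCast, inv_mul_eq_div]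
  gcongr
  calc _ ≤ _ := norm_add_le _ _
    _ ≤ C * (1 + Real.log (N + 1)) + G * BL := by
        gcongr
        · exact norm_sum_Icc_sub_geom_smul_le hC (fun n hn => ha n hn x) N
        · rw [norm_smul]
          exact mul_le_mul (norm_geom_sum_Icc_sub_le hμ hpN) (hL x) (norm_nonneg _) hG
    _ ≤ C' * Real.log N := by linarith [hlog N hN]

theorem tendstoUniformly_of_norm_sub_le_div {K E : Type*} [NormedAddCommGroup E]
    {F : ℕ → K → E} {f : K → E} {C : ℝ} {p : ℕ}
    (h : ∀ n, p ≤ n → ∀ x, ‖F n x - f x‖ ≤ C / (n + 1)) : TendstoUniformly F f atTop := by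
  rw [Metric.tendstoUniformly_iff]
  intro ε hε
  have hlim : Tendsto (fun n : ℕ => C / ((n : ℝ) + 1)) atTop (𝓝 0) := by
    simpa [div_eq_mul_inv] using (tendsto_one_div_add_atTop_nhds_zero_nat (𝕜 := ℝ)).const_mul C
  filter_upwards [eventually_ge_atTop p, hlim.eventually (gt_mem_nhds hε)] with n hpn hn x
  rw [dist_comm, dist_eq_norm]
  exact (h n hpn x).trans_lt hn

theorem stmt9 {K : Type*} [Nonempty K] (g : K → K) (u : K → ℂ)
    (hu : ∃ B : ℝ, ∀ x, ‖u x‖ ≤ B)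
    (lam : ℝ) (hlam : 1 < lam) (η : ℂ) (hη : ‖η‖ = lam)
    (m : ℕ) (hm : 1 ≤ m)
    (v : ℕ → K → ℂ)
    (hv : ∀ n, m - 1 ≤ n → ∀ x, v n x =
      ((n : ℂ) ^ (m - 1) * (lam : ℂ) ^ n)⁻¹ *
        ∑ j ∈ Finset.Icc (m - 1) n,
          (j.choose (m - 1) : ℂ) * η ^ (j + 1 - m) * u (g^[n - j] x))
    (w : ℕ → K → ℂ)
    (hw : ∀ N, m ≤ N → ∀ x, w N x = (N : ℂ)⁻¹ * ∑ n ∈ Finset.Icc (m - 1) N, v n x) :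
    ∃ wlim : K → ℂ, (∃ B' : ℝ, ∀ x, ‖wlim x‖ ≤ B') ∧
      (∃ C : ℝ, 0 < C ∧ ∀ N : ℕ, 2 ≤ N → m ≤ N → ∀ x,
        ‖w N x - wlim x‖ ≤ C * Real.log N / N) ∧
      (η ≠ (lam : ℂ) → wlim = 0) ∧
      (η = (lam : ℂ) →
        TendstoUniformly (fun n x => ((lam : ℂ) / η) ^ n * v n x) wlim Filter.atTop) := by
  obtain ⟨B, hB⟩ := hu
  have hB0 : 0 ≤ B := (norm_nonneg _).trans (hB (Classical.arbitrary K))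
  obtain ⟨p, rfl⟩ : ∃ p, m = p + 1 := ⟨m - 1, by omega⟩
  simp only [Nat.add_sub_cancel, Nat.add_sub_add_right] at hv hw
  have hη1 : 1 < ‖η‖ := hη ▸ hlam
  have hlamC : (lam : ℂ) ≠ 0 := Complex.ofReal_ne_zero.2 (by linarith)
  have hμ : ‖η / lam‖ = 1 := by
    rw [norm_div, hη, Complex.norm_real, Real.norm_of_nonneg (by linarith), div_self (by linarith)]
  set vlim : K → ℂ := fun x => jordanLimit η p fun k => u (g^[k] x)
  have hvlim : ∀ x, ‖vlim x‖ ≤ B * (1 - ‖η‖⁻¹)⁻¹ := fun x => norm_jordanLimit_le hη1 (fun _ => hB _) p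
  have happrox : ∀ n, p ≤ n → ∀ x, ‖v n x - (η / lam) ^ n • vlim x‖ ≤
      (p + 1) * B * (lam⁻¹ / (1 - lam⁻¹) ^ 2 + (p + 1) / (1 - lam⁻¹)) / (n + 1) := by
    intro n hn x
    rw [hv n hn x, smul_eq_mul]
    exact norm_jordanSum_sub_jordanLimit_le hlam hη (F := fun k => u (g^[k] x)) (fun _ => hB _) hn
  have hr1 : lam⁻¹ < 1 := inv_lt_one_of_one_lt₀ hlam
  obtain ⟨C, hC, hrate⟩ := exists_norm_cesaro_sub_le hvlim (by positivity) hμ happrox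
  simp only [div_eq_one_iff_eq hlamC, smul_eq_mul] at hrate
  refine ⟨fun x => if η = lam then vlim x else 0, ⟨B * (1 - ‖η‖⁻¹)⁻¹, fun x => ?_⟩,
    ⟨C, hC, fun N hN hNm x => ?_⟩, fun h => funext fun x => if_neg h, fun h => ?_⟩
  · split_ifs
    · exact hvlim x
    · rw [norm_zero]; exact (norm_nonneg _).trans (hvlim x)
  · rw [hw N hNm x]
    exact hrate N hN (by omega) x
  · subst h
    simp only [div_self hlamC, one_pow, one_mul, one_smul, if_true] at happrox ⊢
    exact tendstoUniformly_of_norm_sub_le_div happrox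
end

section
/- Let K be a metric space, M > 1 a real number, and g : K → K a map with dist(g(x), g(y)) ≤ M·dist(x, y) for all x, y ∈ K. Let ν > 0 and let u : K → ℂ be bounded and ν-Hölder continuous, i.e. there is c ≥ 0 with |u(x) − u(y)| ≤ c·dist(x, y)^ν for all x, y. Set λ := M^ν and h(x) := Σ_{j=0}^{∞} λ^{−j}·u(g^j(x)) (the series converges absolutely since λ > 1). Then there is a constant C > 0 such that |h(x) − h(y)| ≤ C·(1 + |log dist(x, y)|)·dist(x, y)^ν for all x, y ∈ K with 0 < dist(x, y) ≤ 1/2; in particular, h is ν'-Hölder continuous for every ν' with 0 < ν' < ν. -/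
/-!
Each term of the series for `h x - h y` has two bounds: `c δ^ν`, because `g^[j]` is
`M^j`-Lipschitz and `λ^{-j} (M^j δ)^ν = δ^ν`, and `2B λ^{-j}`, because `u` is bounded. Using the
first bound for the first `q ≈ |log δ| / log M` terms and the second one for the geometric tail,
which is then `≲ λ^{-q} ≤ δ^ν`, gives `‖h x - h y‖ ≲ (1 + |log δ|) δ^ν`. As `(1 + |log δ|) δ^ε`
stays bounded on `(0, 1]` for every `ε > 0`, `h` is `ν'`-Hölder for `ν' < ν`; for `δ > 1/2` the
boundedness of `h` suffices.
-/

noncomputable def orbitSum {K : Type*} (lam : ℝ) (g : K → K) (u : K → ℂ) (x : K) : ℂ :=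
  ∑' j : ℕ, ((lam : ℂ) ^ j)⁻¹ * u (g^[j] x)

lemma dist_iterate_le_pow_mul {K : Type*} [PseudoMetricSpace K] {g : K → K} {M : ℝ}
    (hM : 0 ≤ M) (hg : ∀ x y, dist (g x) (g y) ≤ M * dist x y) (n : ℕ) (x y : K) :
    dist (g^[n] x) (g^[n] y) ≤ M ^ n * dist x y := by
  induction n generalizing x y with
  | zero => simp
  | succ n ih =>
    rw [Function.iterate_succ_apply', Function.iterate_succ_apply', pow_succ', mul_assoc]
    exact (hg _ _).trans (mul_le_mul_of_nonneg_left (ih x y) hM)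

lemma tsum_le_natCast_mul_add_geometric {a : ℕ → ℝ} {A B r : ℝ} (ha : ∀ j, 0 ≤ a j)
    (haA : ∀ j, a j ≤ A) (haB : ∀ j, a j ≤ B * r ^ j) (hr0 : 0 ≤ r) (hr1 : r < 1) (q : ℕ) :
    ∑' j, a j ≤ q * A + B * r ^ q * (1 - r)⁻¹ := by
  have hgeo := summable_geometric_of_lt_one hr0 hr1
  have hsum : Summable a := (hgeo.mul_left B).of_nonneg_of_le ha haB
  rw [← hsum.sum_add_tsum_nat_add q]
  gcongr ?_ + ?_
  · calc ∑ j ∈ Finset.range q, a j ≤ ∑ _j ∈ Finset.range q, A :=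
          Finset.sum_le_sum fun j _ => haA j
      _ = q * A := by simp
  · calc ∑' j, a (j + q) ≤ ∑' j, B * r ^ q * r ^ j :=
          ((summable_nat_add_iff q).mpr hsum).tsum_le_tsum
            (fun j => (haB _).trans_eq (by ring)) (hgeo.mul_left _)
      _ = B * r ^ q * (1 - r)⁻¹ := by rw [tsum_mul_left, tsum_geometric_of_lt_one hr0 hr1]

lemma exists_inv_le_pow_and_le_one_add_log_div {M δ : ℝ} (hM : 1 < M) (hδ : 0 < δ) :
    ∃ q : ℕ, δ⁻¹ ≤ M ^ q ∧ (q : ℝ) ≤ 1 + |Real.log δ| / Real.log M := by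
  have hlogM := Real.log_pos hM
  refine ⟨⌈|Real.log δ| / Real.log M⌉₊, ?_, ?_⟩
  · rw [← Real.log_le_log_iff (by positivity) (by positivity), Real.log_inv, Real.log_pow]
    have hq := Nat.le_ceil (|Real.log δ| / Real.log M)
    rw [div_le_iff₀ hlogM] at hq
    linarith [neg_le_abs (Real.log δ)]
  · linarith [Nat.ceil_lt_add_one (by positivity : 0 ≤ |Real.log δ| / Real.log M)]

lemma one_add_abs_log_mul_rpow_le {δ ε : ℝ} (hδ0 : 0 < δ) (hδ1 : δ ≤ 1) (hε : 0 < ε) :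
    (1 + |Real.log δ|) * δ ^ ε ≤ 1 + 1 / ε := by
  have hδε : 0 ≤ δ ^ ε := by positivity
  calc (1 + |Real.log δ|) * δ ^ ε = δ ^ ε + |Real.log δ * δ ^ ε| := by
        rw [abs_mul, abs_of_nonneg hδε]; ring
    _ ≤ 1 + 1 / ε := add_le_add (Real.rpow_le_one hδ0.le hδ1 hε.le)
        (Real.abs_log_mul_self_rpow_lt δ ε hδ0 hδ1 hε).le

lemma exists_holder_of_log_holder {K E : Type*} [MetricSpace K] [SeminormedAddCommGroup E]
    {f : K → E} {R C ν ν' : ℝ} (hR : ∀ x, ‖f x‖ ≤ R) (hC : 0 ≤ C)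
    (hf : ∀ x y, 0 < dist x y → dist x y ≤ 1 / 2 →
      ‖f x - f y‖ ≤ C * (1 + |Real.log (dist x y)|) * dist x y ^ ν)
    (hν' : 0 < ν') (hν'ν : ν' < ν) :
    ∃ c', 0 ≤ c' ∧ ∀ x y, ‖f x - f y‖ ≤ c' * dist x y ^ ν' := by
  have hε : 0 < ν - ν' := sub_pos.mpr hν'ν
  have hC' : 0 ≤ C * (1 + 1 / (ν - ν')) := by positivity
  refine ⟨max (C * (1 + 1 / (ν - ν'))) (2 * R * 2 ^ ν'), hC'.trans (le_max_left _ _),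
    fun x y => ?_⟩
  rcases (dist_nonneg (x := x) (y := y)).eq_or_lt with hxy | hxy
  · simp [dist_eq_zero.mp hxy.symm, Real.zero_rpow hν'.ne']
  rcases le_or_gt (dist x y) (1 / 2) with hle | hgt
  · calc ‖f x - f y‖ ≤ C * (1 + |Real.log (dist x y)|) * dist x y ^ ν := hf x y hxy hle
      _ = C * ((1 + |Real.log (dist x y)|) * dist x y ^ (ν - ν')) * dist x y ^ ν' := by
          rw [mul_assoc, mul_assoc, mul_assoc, ← Real.rpow_add hxy, sub_add_cancel]
      _ ≤ C * (1 + 1 / (ν - ν')) * dist x y ^ ν' := by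
          gcongr
          exact one_add_abs_log_mul_rpow_le hxy (by linarith) hε
      _ ≤ _ := by gcongr; exact le_max_left _ _
  · have hR0 : 0 ≤ R := (norm_nonneg _).trans (hR x)
    calc ‖f x - f y‖ ≤ 2 * R := (norm_sub_le_of_le (hR x) (hR y)).trans_eq (two_mul R).symm
      _ ≤ 2 * R * (2 * dist x y) ^ ν' :=
          le_mul_of_one_le_right (by positivity) (Real.one_le_rpow (by linarith) hν'.le)
      _ = 2 * R * 2 ^ ν' * dist x y ^ ν' := by rw [Real.mul_rpow zero_le_two dist_nonneg]; ring
      _ ≤ _ := by gcongr; exact le_max_right _ _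

lemma norm_inv_pow_mul {lam : ℝ} (hlam : 0 ≤ lam) (j : ℕ) (z : ℂ) :
    ‖((lam : ℂ) ^ j)⁻¹ * z‖ = lam⁻¹ ^ j * ‖z‖ := by
  rw [norm_mul, norm_inv, norm_pow, Complex.norm_real, Real.norm_of_nonneg hlam, inv_pow]

lemma norm_inv_pow_mul_le {lam B : ℝ} {z : ℂ} (hlam : 0 ≤ lam) (hz : ‖z‖ ≤ B) (j : ℕ) :
    ‖((lam : ℂ) ^ j)⁻¹ * z‖ ≤ B * lam⁻¹ ^ j := by
  rw [norm_inv_pow_mul hlam, mul_comm]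
  gcongr

lemma summable_norm_inv_pow_mul {lam B : ℝ} {v : ℕ → ℂ} (hlam : 1 < lam) (hv : ∀ j, ‖v j‖ ≤ B) :
    Summable fun j => ‖((lam : ℂ) ^ j)⁻¹ * v j‖ :=
  ((summable_geometric_of_lt_one (by positivity) (inv_lt_one_of_one_lt₀ hlam)).mul_left B
    ).of_nonneg_of_le (fun _ => norm_nonneg _) fun j => norm_inv_pow_mul_le (by positivity) (hv j) j

section orbitSum

variable {K : Type*} {g : K → K} {u : K → ℂ} {lam B : ℝ}

lemma norm_orbitSum_le (hlam : 1 < lam) (hB : ∀ x, ‖u x‖ ≤ B) (x : K) :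
    ‖orbitSum lam g u x‖ ≤ B * (1 - lam⁻¹)⁻¹ := by
  have hr0 : 0 ≤ lam⁻¹ := by positivity
  calc ‖orbitSum lam g u x‖ ≤ ∑' j : ℕ, ‖((lam : ℂ) ^ j)⁻¹ * u (g^[j] x)‖ :=
        norm_tsum_le_tsum_norm (summable_norm_inv_pow_mul hlam fun _ => hB _)
    _ ≤ ∑' j : ℕ, B * lam⁻¹ ^ j :=
        (summable_norm_inv_pow_mul hlam fun _ => hB _).tsum_le_tsum
          (fun j => norm_inv_pow_mul_le (by positivity) (hB _) j)
          ((summable_geometric_of_lt_one hr0 (inv_lt_one_of_one_lt₀ hlam)).mul_left B)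
    _ = B * (1 - lam⁻¹)⁻¹ := by
        rw [tsum_mul_left, tsum_geometric_of_lt_one hr0 (inv_lt_one_of_one_lt₀ hlam)]

lemma orbitSum_sub (hlam : 1 < lam) (hB : ∀ x, ‖u x‖ ≤ B) (x y : K) :
    orbitSum lam g u x - orbitSum lam g u y =
      ∑' j : ℕ, ((lam : ℂ) ^ j)⁻¹ * (u (g^[j] x) - u (g^[j] y)) := by
  rw [orbitSum, orbitSum, ← (summable_norm_inv_pow_mul hlam fun _ => hB _).of_norm.tsum_sub
    (summable_norm_inv_pow_mul hlam fun _ => hB _).of_norm]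
  simp_rw [mul_sub]

variable [PseudoMetricSpace K] {M ν c : ℝ}

lemma norm_inv_rpow_pow_mul_sub_le (hM : 0 < M) (hν : 0 ≤ ν) (hc0 : 0 ≤ c)
    (hg : ∀ x y, dist (g x) (g y) ≤ M * dist x y) (hc : ∀ x y, ‖u x - u y‖ ≤ c * dist x y ^ ν)
    (j : ℕ) (x y : K) :
    ‖(((M ^ ν : ℝ) : ℂ) ^ j)⁻¹ * (u (g^[j] x) - u (g^[j] y))‖ ≤ c * dist x y ^ ν := by
  rw [norm_inv_pow_mul (by positivity)]
  calc (M ^ ν)⁻¹ ^ j * ‖u (g^[j] x) - u (g^[j] y)‖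
      ≤ (M ^ ν)⁻¹ ^ j * (c * (M ^ j * dist x y) ^ ν) := by
        gcongr
        exact (hc _ _).trans (by gcongr; exact dist_iterate_le_pow_mul hM.le hg j x y)
    _ = ((M ^ ν)⁻¹ * M ^ ν) ^ j * (c * dist x y ^ ν) := by
        rw [Real.mul_rpow (by positivity) dist_nonneg, ← Real.rpow_pow_comm hM.le]; ring
    _ = c * dist x y ^ ν := by
        rw [inv_mul_cancel₀ (by positivity), one_pow, one_mul]

lemma exists_log_holder_orbitSum (hM : 1 < M) (hν : 0 < ν)
    (hg : ∀ x y, dist (g x) (g y) ≤ M * dist x y) (hB0 : 0 ≤ B) (hB : ∀ x, ‖u x‖ ≤ B)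
    (hc0 : 0 ≤ c) (hc : ∀ x y, ‖u x - u y‖ ≤ c * dist x y ^ ν) :
    ∃ C, 0 < C ∧ ∀ x y, 0 < dist x y →
      ‖orbitSum (M ^ ν) g u x - orbitSum (M ^ ν) g u y‖ ≤
        C * (1 + |Real.log (dist x y)|) * dist x y ^ ν := by
  have hlam : 1 < M ^ ν := Real.one_lt_rpow hM hν
  set r := (M ^ ν)⁻¹ with hr
  have hr0 : 0 ≤ r := by positivity
  have hr1 : r < 1 := inv_lt_one_of_one_lt₀ hlam
  have hlogM := Real.log_pos hM
  have htail : 0 ≤ 2 * B * (1 - r)⁻¹ := mul_nonneg (by positivity) (inv_nonneg.mpr (by linarith))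
  refine ⟨c * (1 + (Real.log M)⁻¹) + 2 * B * (1 - r)⁻¹ + 1, by positivity, fun x y hxy => ?_⟩
  set δ := dist x y
  have hu2 : ∀ j, ‖u (g^[j] x) - u (g^[j] y)‖ ≤ 2 * B := fun j =>
    (norm_sub_le_of_le (hB _) (hB _)).trans_eq (two_mul B).symm
  obtain ⟨q, hMq, hq⟩ := exists_inv_le_pow_and_le_one_add_log_div hM hxy
  have hrq : r ^ q ≤ δ ^ ν :=
    calc r ^ q = ((M ^ q) ^ ν)⁻¹ := by rw [hr, inv_pow, Real.rpow_pow_comm (by positivity)]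
      _ ≤ (δ⁻¹ ^ ν)⁻¹ := by gcongr
      _ = δ ^ ν := by rw [Real.inv_rpow hxy.le, inv_inv]
  have hsplit := tsum_le_natCast_mul_add_geometric (fun _ => norm_nonneg _)
    (norm_inv_rpow_pow_mul_sub_le (by positivity) hν.le hc0 hg hc · x y)
    (fun j => norm_inv_pow_mul_le (by positivity) (hu2 j) j) hr0 hr1 q
  have hcross : 0 ≤ c * δ ^ ν * (|Real.log δ| + (Real.log M)⁻¹) +
      2 * B * (1 - r)⁻¹ * |Real.log δ| * δ ^ ν + (1 + |Real.log δ|) * δ ^ ν := by positivity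
  rw [orbitSum_sub hlam hB]
  calc _ ≤ ∑' j : ℕ, ‖(((M ^ ν : ℝ) : ℂ) ^ j)⁻¹ * (u (g^[j] x) - u (g^[j] y))‖ :=
        norm_tsum_le_tsum_norm (summable_norm_inv_pow_mul hlam hu2)
    _ ≤ q * (c * δ ^ ν) + 2 * B * r ^ q * (1 - r)⁻¹ := hsplit
    _ ≤ (1 + |Real.log δ| / Real.log M) * (c * δ ^ ν) + 2 * B * δ ^ ν * (1 - r)⁻¹ := by
        gcongr
    _ ≤ _ := by rw [div_eq_mul_inv]; linear_combination hcross

end orbitSum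

theorem stmt11_general {K : Type*} [MetricSpace K]
    (M : ℝ) (hM : 1 < M) (g : K → K)
    (hg : ∀ x y : K, dist (g x) (g y) ≤ M * dist x y)
    (ν : ℝ) (hν : 0 < ν) (u : K → ℂ)
    (hu_bdd : ∃ B : ℝ, ∀ x, ‖u x‖ ≤ B)
    (hu_hold : ∃ c : ℝ, 0 ≤ c ∧ ∀ x y : K, ‖u x - u y‖ ≤ c * dist x y ^ ν)
    (lam : ℝ) (hlam : lam = M ^ ν)
    (h : K → ℂ) (hh : ∀ x, h x = ∑' j : ℕ, ((lam : ℂ) ^ j)⁻¹ * u (g^[j] x)) :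
    (∀ x : K, Summable (fun j : ℕ => ‖((lam : ℂ) ^ j)⁻¹ * u (g^[j] x)‖)) ∧
      (∃ C : ℝ, 0 < C ∧ ∀ x y : K, 0 < dist x y → dist x y ≤ 1 / 2 →
        ‖h x - h y‖ ≤ C * (1 + |Real.log (dist x y)|) * dist x y ^ ν) ∧
      ∀ ν' : ℝ, 0 < ν' → ν' < ν →
        ∃ c' : ℝ, 0 ≤ c' ∧ ∀ x y : K, ‖h x - h y‖ ≤ c' * dist x y ^ ν' := by
  obtain ⟨B, hB0, hB⟩ : ∃ B, 0 ≤ B ∧ ∀ x, ‖u x‖ ≤ B := by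
    obtain ⟨B, hB⟩ := hu_bdd
    exact ⟨max B 0, le_max_right _ _, fun x => (hB x).trans (le_max_left _ _)⟩
  obtain ⟨c, hc0, hc⟩ := hu_hold
  obtain rfl : h = orbitSum lam g u := funext hh
  subst hlam
  have hlam : 1 < M ^ ν := Real.one_lt_rpow hM hν
  obtain ⟨C, hC, hlog⟩ := exists_log_holder_orbitSum hM hν hg hB0 hB hc0 hc
  have hlog' : ∀ x y, 0 < dist x y → dist x y ≤ 1 / 2 → ‖orbitSum (M ^ ν) g u x -
      orbitSum (M ^ ν) g u y‖ ≤ C * (1 + |Real.log (dist x y)|) * dist x y ^ ν :=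
    fun x y hxy _ => hlog x y hxy
  exact ⟨fun x => summable_norm_inv_pow_mul hlam fun _ => hB _, ⟨C, hC, hlog'⟩,
    fun ν' hν' hν'ν => exists_holder_of_log_holder (norm_orbitSum_le hlam hB) hC.le hlog' hν' hν'ν⟩

theorem stmt11 {K : Type*} [MetricSpace K] [Nonempty K]
    (M : ℝ) (hM : 1 < M) (g : K → K)
    (hg : ∀ x y : K, dist (g x) (g y) ≤ M * dist x y)
    (ν : ℝ) (hν : 0 < ν) (u : K → ℂ)
    (hu_bdd : ∃ B : ℝ, ∀ x, ‖u x‖ ≤ B)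
    (hu_hold : ∃ c : ℝ, 0 ≤ c ∧ ∀ x y : K, ‖u x - u y‖ ≤ c * dist x y ^ ν)
    (lam : ℝ) (hlam : lam = M ^ ν)
    (h : K → ℂ) (hh : ∀ x, h x = ∑' j : ℕ, ((lam : ℂ) ^ j)⁻¹ * u (g^[j] x)) :
    (∀ x : K, Summable (fun j : ℕ => ‖((lam : ℂ) ^ j)⁻¹ * u (g^[j] x)‖)) ∧
      (∃ C : ℝ, 0 < C ∧ ∀ x y : K, 0 < dist x y → dist x y ≤ 1 / 2 →
        ‖h x - h y‖ ≤ C * (1 + |Real.log (dist x y)|) * dist x y ^ ν) ∧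
      ∀ ν' : ℝ, 0 < ν' → ν' < ν →
        ∃ c' : ℝ, 0 ≤ c' ∧ ∀ x y : K, ‖h x - h y‖ ≤ c' * dist x y ^ ν' :=
  stmt11_general M hM g hg ν hν u hu_bdd hu_hold lam hlam h hh
end
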